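/- arXiv:1803.01082 — 2 statements merged into one kernel-verified Lean document; each statement's English description precedes it below -/
import Mathlib

section
/- Let a, θ be reals with 0 < θ < a, and let 0 ≤ s ≤ t. Then ∫₀^t ( ∫₀^s exp(θ(y₁+y₂))·( exp(−a·|y₂−y₁|) − exp(−a(y₁+y₂)) ) dy₁ ) dy₂ = a·[ exp(2θs)/(θ(a+θ)(a−θ)) + 2·exp(−(a−θ)s)/((a+θ)(a−θ)²) − 1/(θ(a−θ)²) − exp((a+θ)s − (a−θ)t)/(a(a+θ)(a−θ)) + 2·exp(−(a−θ)t)/((a+θ)(a−θ)²) − exp(−(a−θ)(s+t))/(a(a−θ)²) ]. -/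
/-!
With `p = θ + a` and `q = θ - a` the integrand is `e^{p min(y₁,y₂) + q max(y₁,y₂)}` minus the
product `e^{q y₁} e^{q y₂}`, whose double integral factorises. For the first term, the inner
integral over `y₁ ∈ [0, s]` is a single exponential integral when `y₂ ≥ s`, and splits at
`y₁ = y₂` into two such integrals when `y₂ ≤ s`; so the outer integral over `[0, s]` and over
`[s, t]` is again a sum of integrals of exponentials, and the rest is algebra.
-/

open Real intervalIntegral

lemma integral_exp_mul {c : ℝ} (hc : c ≠ 0) (x y : ℝ) :
    ∫ u in x..y, exp (c * u) = (exp (c * y) - exp (c * x)) / c := by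
  rw [integral_comp_mul_left (fun u => exp u) hc, integral_exp, smul_eq_mul, inv_mul_eq_div]

lemma intervalIntegrable_const_mul_exp_mul (A c x y : ℝ) :
    IntervalIntegrable (fun u => A * exp (c * u)) MeasureTheory.volume x y :=
  (by fun_prop : Continuous fun u => A * exp (c * u)).intervalIntegrable x y

lemma exp_mul_add_mul_exp_neg_abs_sub (θ a x y : ℝ) :
    exp (θ * (x + y)) * (exp (-(a * |y - x|)) - exp (-(a * (x + y)))) =
      exp ((θ + a) * min x y + (θ - a) * max x y) - exp ((θ - a) * x) * exp ((θ - a) * y) := by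
  rw [mul_sub, ← exp_add, ← exp_add, ← exp_add]
  congr 2
  · rcases le_total x y with h | h
    · rw [abs_of_nonneg (sub_nonneg.2 h), min_eq_left h, max_eq_right h]; ring
    · rw [abs_of_nonpos (sub_nonpos.2 h), min_eq_right h, max_eq_left h]; ring
  · ring

lemma integral_integral_sub {E : Type*} [NormedAddCommGroup E] [NormedSpace ℝ E]
    {f g : ℝ → ℝ → E} (hf : Continuous (Function.uncurry f))
    (hg : Continuous (Function.uncurry g)) (a b c d : ℝ) :
    ∫ y in a..b, ∫ x in c..d, (f y x - g y x) =
      (∫ y in a..b, ∫ x in c..d, f y x) - ∫ y in a..b, ∫ x in c..d, g y x := by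
  have hinner : ∀ y, ∫ x in c..d, (f y x - g y x) = (∫ x in c..d, f y x) - ∫ x in c..d, g y x :=
    fun y => integral_sub ((hf.uncurry_left y).intervalIntegrable c d)
      ((hg.uncurry_left y).intervalIntegrable c d)
  simp only [hinner]
  exact integral_sub
    ((continuous_parametric_intervalIntegral_of_continuous' hf c d).intervalIntegrable a b)
    ((continuous_parametric_intervalIntegral_of_continuous' hg c d).intervalIntegrable a b)

section MinMaxKernel

variable {p q r s t y : ℝ}

lemma integral_exp_min_max_of_le (hp : p ≠ 0) (hrs : r ≤ s) (hsy : s ≤ y) :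
    ∫ x in r..s, exp (p * min x y + q * max x y) =
      exp (q * y) * ((exp (p * s) - exp (p * r)) / p) := by
  have hkernel : ∀ x ∈ Set.uIcc r s,
      exp (p * min x y + q * max x y) = exp (q * y) * exp (p * x) := fun x hx => by
    have hxy : x ≤ y := (Set.uIcc_of_le hrs ▸ hx).2.trans hsy
    rw [min_eq_left hxy, max_eq_right hxy, ← exp_add, add_comm]
  rw [integral_congr hkernel, integral_const_mul, integral_exp_mul hp]

lemma integral_exp_min_max_of_ge (hq : q ≠ 0) (hyr : y ≤ r) (hrs : r ≤ s) :
    ∫ x in r..s, exp (p * min x y + q * max x y) =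
      exp (p * y) * ((exp (q * s) - exp (q * r)) / q) := by
  have hkernel : ∀ x ∈ Set.uIcc r s,
      exp (p * min x y + q * max x y) = exp (p * y) * exp (q * x) := fun x hx => by
    have hyx : y ≤ x := hyr.trans (Set.uIcc_of_le hrs ▸ hx).1
    rw [min_eq_right hyx, max_eq_left hyx, ← exp_add]
  rw [integral_congr hkernel, integral_const_mul, integral_exp_mul hq]

lemma integral_exp_min_max_of_mem_Icc (hp : p ≠ 0) (hq : q ≠ 0) (hy : 0 ≤ y) (hys : y ≤ s) :
    ∫ x in (0 : ℝ)..s, exp (p * min x y + q * max x y) =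
      exp (q * y) * ((exp (p * y) - 1) / p) + exp (p * y) * ((exp (q * s) - exp (q * y)) / q) := by
  have hcont : Continuous fun x => exp (p * min x y + q * max x y) := by fun_prop
  rw [← integral_add_adjacent_intervals (hcont.intervalIntegrable 0 y)
    (hcont.intervalIntegrable y s), integral_exp_min_max_of_le hp hy le_rfl,
    integral_exp_min_max_of_ge hq le_rfl hys, mul_zero, exp_zero]

lemma integral_integral_exp_min_max_square (hp : p ≠ 0) (hq : q ≠ 0) (hpq : p + q ≠ 0)
    (hs : 0 ≤ s) :
    ∫ y in (0 : ℝ)..s, ∫ x in (0 : ℝ)..s, exp (p * min x y + q * max x y) =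
      2 * (exp ((p + q) * s) / (p * (p + q)) + 1 / (q * (p + q)) - exp (q * s) / (p * q)) := by
  have hinner : ∀ y ∈ Set.uIcc 0 s, ∫ x in (0 : ℝ)..s, exp (p * min x y + q * max x y) =
      (1 / p - 1 / q) * exp ((p + q) * y) + exp (q * s) / q * exp (p * y)
        - 1 / p * exp (q * y) := fun y hy => by
    rw [Set.uIcc_of_le hs] at hy
    rw [integral_exp_min_max_of_mem_Icc hp hq hy.1 hy.2, add_mul, exp_add]
    field_simp
    ring
  rw [integral_congr hinner, integral_sub, integral_add, integral_const_mul, integral_const_mul,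
    integral_const_mul, integral_exp_mul hpq, integral_exp_mul hp, integral_exp_mul hq,
    add_mul, exp_add]
  · simp only [mul_zero, exp_zero]
    field_simp
    ring
  all_goals apply_rules [IntervalIntegrable.add, intervalIntegrable_const_mul_exp_mul]

lemma integral_integral_exp_min_max (hp : p ≠ 0) (hq : q ≠ 0) (hpq : p + q ≠ 0)
    (hs : 0 ≤ s) (hst : s ≤ t) :
    ∫ y in (0 : ℝ)..t, ∫ x in (0 : ℝ)..s, exp (p * min x y + q * max x y) =
      2 * (exp ((p + q) * s) / (p * (p + q)) + 1 / (q * (p + q)) - exp (q * s) / (p * q))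
        + (exp (p * s) - 1) / p * ((exp (q * t) - exp (q * s)) / q) := by
  have hcont : Continuous fun y => ∫ x in (0 : ℝ)..s, exp (p * min x y + q * max x y) :=
    continuous_parametric_intervalIntegral_of_continuous' (by fun_prop) 0 s
  have hstrip : ∀ y ∈ Set.uIcc s t, ∫ x in (0 : ℝ)..s, exp (p * min x y + q * max x y) =
      (exp (p * s) - 1) / p * exp (q * y) := fun y hy => by
    rw [integral_exp_min_max_of_le hp hs (Set.uIcc_of_le hst ▸ hy).1, mul_zero, exp_zero, mul_comm]
  rw [← integral_add_adjacent_intervals (hcont.intervalIntegrable 0 s)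
    (hcont.intervalIntegrable s t), integral_integral_exp_min_max_square hp hq hpq hs,
    integral_congr hstrip, integral_const_mul, integral_exp_mul hq]

end MinMaxKernel

/-- The core iterated-integral computation in the covariance of the
lower-bound Gaussian process `Π`: for `0 < θ < a` and `0 ≤ s ≤ t`,
`∫₀^t ∫₀^s e^{θ(y₁+y₂)}(e^{−a|y₂−y₁|} − e^{−a(y₁+y₂)}) dy₁ dy₂` equals the
displayed explicit expression. -/
theorem lower_bound_core_integral
    (a θ s t : ℝ) (hθ : 0 < θ) (hθa : θ < a) (hs : 0 ≤ s) (hst : s ≤ t) :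
    (∫ y₂ in (0:ℝ)..t, ∫ y₁ in (0:ℝ)..s,
        Real.exp (θ * (y₁ + y₂))
          * (Real.exp (-(a * |y₂ - y₁|)) - Real.exp (-(a * (y₁ + y₂)))))
      = a * (Real.exp (2 * θ * s) / (θ * (a + θ) * (a - θ))
          + 2 * Real.exp (-((a - θ) * s)) / ((a + θ) * (a - θ) ^ 2)
          - 1 / (θ * (a - θ) ^ 2)
          - Real.exp ((a + θ) * s - (a - θ) * t) / (a * (a + θ) * (a - θ))
          + 2 * Real.exp (-((a - θ) * t)) / ((a + θ) * (a - θ) ^ 2)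
          - Real.exp (-((a - θ) * (s + t))) / (a * (a - θ) ^ 2)) := by
  have hp : θ + a ≠ 0 := by linarith
  have hq : θ - a ≠ 0 := by linarith
  have hpq : (θ + a) + (θ - a) ≠ 0 := by linarith
  simp only [exp_mul_add_mul_exp_neg_abs_sub]
  rw [integral_integral_sub (by fun_prop) (by fun_prop),
    integral_integral_exp_min_max hp hq hpq hs hst]
  simp only [integral_mul_const, integral_const_mul, integral_exp_mul hq]
  rw [show 2 * θ * s = (θ + a) * s + (θ - a) * s by ring,
    show -((a - θ) * s) = (θ - a) * s by ring,
    show (a + θ) * s - (a - θ) * t = (θ + a) * s + (θ - a) * t by ring,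
    show -((a - θ) * t) = (θ - a) * t by ring,
    show -((a - θ) * (s + t)) = (θ - a) * s + (θ - a) * t by ring,
    show (θ + a + (θ - a)) * s = (θ + a) * s + (θ - a) * s by ring]
  simp only [exp_add, mul_zero, exp_zero]
  have hθ0 : θ ≠ 0 := hθ.ne'
  have ha : a ≠ 0 := by linarith
  have ham : a - θ ≠ 0 := by linarith
  have hap : a + θ ≠ 0 := by linarith
  field_simp
  ring
end

section
/- Let μ₁, μ₂ be positive reals, p ∈ (0,1) with p/μ₁ + (1−p)/μ₂ = 1, and 0 < θ < μ₁μ₂. Define P(s,t) := ((μ₁−μ₂)²p(1−p)/((μ₁μ₂+θ)(μ₁μ₂−θ)θ) + 1/θ)·exp(−θ(t−s)) + (2(μ₁−μ₂)²p(1−p)/((μ₁μ₂+θ)(μ₁μ₂−θ)²))·exp(−μ₁μ₂·s − θ·t) − ((μ₁−μ₂)²p(1−p)/(θ(μ₁μ₂−θ)²) + 1/θ)·exp(−θ(s+t)) − ((μ₁−μ₂)²p(1−p)/(μ₁μ₂(μ₁μ₂+θ)(μ₁μ₂−θ)))·exp(−μ₁μ₂(t−s)) + (2(μ₁−μ₂)²p(1−p)/((μ₁μ₂+θ)(μ₁μ₂−θ)²))·exp(−θ·s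 − μ₁μ₂·t) − ((μ₁−μ₂)²p(1−p)/(μ₁μ₂(μ₁μ₂−θ)²))·exp(−μ₁μ₂(s+t)). Then P(t,t) tends to (θ + μ₁ + μ₂ − 1)/(θ(θ + μ₁μ₂)) as t → ∞. -/
/-!
On the diagonal `P(t, t)` is a constant plus exponentials decaying at the rates `μ₁μ₂ + θ`, `2θ`
and `2μ₁μ₂`. The mean condition gives `(μ₁ - μ₂)² p (1 - p) = μ₁μ₂ (μ₁ + μ₂ - μ₁μ₂ - 1)`, which
turns that constant into `(θ + μ₁ + μ₂ - 1) / (θ (θ + μ₁μ₂))`.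
-/

open Filter Topology

lemma tendsto_const_mul_exp_neg_mul_atTop (a : ℝ) {c : ℝ} (hc : 0 < c) :
    Tendsto (fun t : ℝ => a * Real.exp (-(c * t))) atTop (𝓝 0) := by
  simpa using
    (Real.tendsto_exp_neg_atTop_nhds_zero.comp (tendsto_id.const_mul_atTop hc)).const_mul a

/-- `(μ₁ - μ₂)² p (1 - p)` is the variance of the law taking the value `μ₂` with probability `p`
and `μ₁` with probability `1 - p`; by the mean condition its first moment is `μ₁μ₂` and its second
moment is `(μ₁ + μ₂ - 1) μ₁μ₂`. -/
lemma sq_sub_mul_mul_one_sub_eq_of_mean {μ₁ μ₂ p : ℝ} (hμ₁ : μ₁ ≠ 0) (hμ₂ : μ₂ ≠ 0)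
    (hmean : p / μ₁ + (1 - p) / μ₂ = 1) :
    (μ₁ - μ₂) ^ 2 * p * (1 - p) = μ₁ * μ₂ * (μ₁ + μ₂ - μ₁ * μ₂ - 1) := by
  have hfirst : p * μ₂ + (1 - p) * μ₁ = μ₁ * μ₂ := by
    field_simp at hmean
    linarith
  linear_combination (μ₁ + μ₂ - (p * μ₂ + (1 - p) * μ₁) - μ₁ * μ₂) * hfirst

/-- The covariance `P(s, t)` written with `k = (μ₁ - μ₂)² p (1 - p)` and `m = μ₁μ₂`. -/
noncomputable def piCovariance (k m θ s t : ℝ) : ℝ :=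
  (k / ((m + θ) * (m - θ) * θ) + 1 / θ) * Real.exp (-(θ * (t - s)))
    + 2 * k / ((m + θ) * (m - θ) ^ 2) * Real.exp (-(m * s) - θ * t)
    - (k / (θ * (m - θ) ^ 2) + 1 / θ) * Real.exp (-(θ * (s + t)))
    - k / (m * (m + θ) * (m - θ)) * Real.exp (-(m * (t - s)))
    + 2 * k / ((m + θ) * (m - θ) ^ 2) * Real.exp (-(θ * s) - m * t)
    - k / (m * (m - θ) ^ 2) * Real.exp (-(m * (s + t)))

lemma piCovariance_diag {k m θ : ℝ} (hθ : θ ≠ 0) (hm : m ≠ 0) (hmθ : m - θ ≠ 0)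
    (hmθ' : m + θ ≠ 0) (t : ℝ) :
    piCovariance k m θ t t = (k / m + m + θ) / (θ * (m + θ))
      + 4 * k / ((m + θ) * (m - θ) ^ 2) * Real.exp (-((m + θ) * t))
      - (k / (θ * (m - θ) ^ 2) + 1 / θ) * Real.exp (-(2 * θ * t))
      - k / (m * (m - θ) ^ 2) * Real.exp (-(2 * m * t)) := by
  simp only [piCovariance, sub_self, mul_zero, neg_zero, Real.exp_zero, mul_one]
  rw [show -(m * t) - θ * t = -((m + θ) * t) by ring, show -(θ * t) - m * t = -((m + θ) * t) by ring,
    show θ * (t + t) = 2 * θ * t by ring, show m * (t + t) = 2 * m * t by ring]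
  field_simp
  ring

lemma tendsto_piCovariance_diag (k : ℝ) {m θ : ℝ} (hθ : 0 < θ) (hmθ : θ < m) :
    Tendsto (fun t => piCovariance k m θ t t) atTop (𝓝 ((k / m + m + θ) / (θ * (m + θ)))) := by
  have hm : 0 < m := hθ.trans hmθ
  have hlim := (((tendsto_const_nhds (x := (k / m + m + θ) / (θ * (m + θ)))).add
      (tendsto_const_mul_exp_neg_mul_atTop (4 * k / ((m + θ) * (m - θ) ^ 2))
        (by positivity : 0 < m + θ))).sub
      (tendsto_const_mul_exp_neg_mul_atTop (k / (θ * (m - θ) ^ 2) + 1 / θ)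
        (by positivity : 0 < 2 * θ))).sub
      (tendsto_const_mul_exp_neg_mul_atTop (k / (m * (m - θ) ^ 2)) (by positivity : 0 < 2 * m))
  rw [add_zero, sub_zero, sub_zero] at hlim
  exact hlim.congr fun t =>
    (piCovariance_diag hθ.ne' hm.ne' (sub_ne_zero.mpr hmθ.ne') (by positivity) t).symm

theorem pi_variance_limit_general
    (μ₁ μ₂ p θ : ℝ)
    (hmean : p / μ₁ + (1 - p) / μ₂ = 1)
    (hθ0 : 0 < θ) (hθ : θ < μ₁ * μ₂)
    (P : ℝ → ℝ → ℝ)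
    (hP : ∀ s t : ℝ,
      P s t =
        ((μ₁ - μ₂) ^ 2 * p * (1 - p)
              / ((μ₁ * μ₂ + θ) * (μ₁ * μ₂ - θ) * θ) + 1 / θ)
            * Real.exp (-(θ * (t - s)))
        + 2 * (μ₁ - μ₂) ^ 2 * p * (1 - p)
              / ((μ₁ * μ₂ + θ) * (μ₁ * μ₂ - θ) ^ 2)
            * Real.exp (-(μ₁ * μ₂ * s) - θ * t)
        - ((μ₁ - μ₂) ^ 2 * p * (1 - p) / (θ * (μ₁ * μ₂ - θ) ^ 2) + 1 / θ)
            * Real.exp (-(θ * (s + t)))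
        - (μ₁ - μ₂) ^ 2 * p * (1 - p)
              / ((μ₁ * μ₂) * (μ₁ * μ₂ + θ) * (μ₁ * μ₂ - θ))
            * Real.exp (-(μ₁ * μ₂ * (t - s)))
        + 2 * (μ₁ - μ₂) ^ 2 * p * (1 - p)
              / ((μ₁ * μ₂ + θ) * (μ₁ * μ₂ - θ) ^ 2)
            * Real.exp (-(θ * s) - μ₁ * μ₂ * t)
        - (μ₁ - μ₂) ^ 2 * p * (1 - p) / ((μ₁ * μ₂) * (μ₁ * μ₂ - θ) ^ 2)
            * Real.exp (-(μ₁ * μ₂ * (s + t)))) :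
    Tendsto (fun t => P t t) atTop
      (nhds ((θ + μ₁ + μ₂ - 1) / (θ * (θ + μ₁ * μ₂)))) := by
  have hm : μ₁ * μ₂ ≠ 0 := (hθ0.trans hθ).ne'
  have hP_eq : ∀ t, P t t = piCovariance ((μ₁ - μ₂) ^ 2 * p * (1 - p)) (μ₁ * μ₂) θ t t := by
    intro t
    rw [hP, piCovariance]
    ring
  have hlimit : ((μ₁ - μ₂) ^ 2 * p * (1 - p) / (μ₁ * μ₂) + μ₁ * μ₂ + θ) / (θ * (μ₁ * μ₂ + θ))
      = (θ + μ₁ + μ₂ - 1) / (θ * (θ + μ₁ * μ₂)) := by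
    rw [sq_sub_mul_mul_one_sub_eq_of_mean (left_ne_zero_of_mul hm) (right_ne_zero_of_mul hm) hmean,
      mul_div_cancel_left₀ _ hm, add_comm θ (μ₁ * μ₂)]
    ring
  rw [← hlimit]
  exact (tendsto_piCovariance_diag _ hθ0 hθ).congr fun t => (hP_eq t).symm

/-- The limiting variance of the lower-bound Gaussian process `Π`:
`P(t,t) → (θ + μ₁ + μ₂ − 1)/(θ(θ + μ₁μ₂))` as `t → ∞`, where
`P(s,t) = E[Π(s)Π(t)]` is the explicit covariance formula. -/
theorem pi_variance_limit
    (μ₁ μ₂ p θ : ℝ)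
    (hμ₁ : 0 < μ₁) (hμ₂ : 0 < μ₂)
    (hp0 : 0 < p) (hp1 : p < 1)
    (hmean : p / μ₁ + (1 - p) / μ₂ = 1)
    (hθ0 : 0 < θ) (hθ : θ < μ₁ * μ₂)
    (P : ℝ → ℝ → ℝ)
    (hP : ∀ s t : ℝ,
      P s t =
        ((μ₁ - μ₂) ^ 2 * p * (1 - p)
              / ((μ₁ * μ₂ + θ) * (μ₁ * μ₂ - θ) * θ) + 1 / θ)
            * Real.exp (-(θ * (t - s)))
        + 2 * (μ₁ - μ₂) ^ 2 * p * (1 - p)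
              / ((μ₁ * μ₂ + θ) * (μ₁ * μ₂ - θ) ^ 2)
            * Real.exp (-(μ₁ * μ₂ * s) - θ * t)
        - ((μ₁ - μ₂) ^ 2 * p * (1 - p) / (θ * (μ₁ * μ₂ - θ) ^ 2) + 1 / θ)
            * Real.exp (-(θ * (s + t)))
        - (μ₁ - μ₂) ^ 2 * p * (1 - p)
              / ((μ₁ * μ₂) * (μ₁ * μ₂ + θ) * (μ₁ * μ₂ - θ))
            * Real.exp (-(μ₁ * μ₂ * (t - s)))
        + 2 * (μ₁ - μ₂) ^ 2 * p * (1 - p)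
              / ((μ₁ * μ₂ + θ) * (μ₁ * μ₂ - θ) ^ 2)
            * Real.exp (-(θ * s) - μ₁ * μ₂ * t)
        - (μ₁ - μ₂) ^ 2 * p * (1 - p) / ((μ₁ * μ₂) * (μ₁ * μ₂ - θ) ^ 2)
            * Real.exp (-(μ₁ * μ₂ * (s + t)))) :
    Tendsto (fun t => P t t) atTop
      (nhds ((θ + μ₁ + μ₂ - 1) / (θ * (θ + μ₁ * μ₂)))) :=
  pi_variance_limit_general μ₁ μ₂ p θ hmean hθ0 hθ P hP
end
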